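/- arXiv:2511.18809 — 4 statements merged into one kernel-verified Lean document; each statement's English description precedes it below -/
import Mathlib

section
/- Let (F,d) be a differential field of characteristic 0 with d ≠ 0. Then every finite-dimensional differential module (M,D) over F admits a cyclic vector, i.e. an element m ∈ M such that m, D(m), …, D^{n-1}(m) form an F-basis of M, where n = dim_F M. -/
/-!
Choose `m` whose first `k` iterates `m, D m, …, D^{k-1} m` are linearly independent with `k`
maximal, write `D^k m = ∑ βᵢ Dⁱ m` and `L u := D^k u - ∑ βᵢ Dⁱ u`. For a positive integer `q`
(a constant) the iterates of `m + q u` are dependent, hence so are `Dⁱ (m + q u)` (`i < k`)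
together with `L u = q⁻¹ L (m + q u)`. A determinant of this family is a polynomial in `q`, which
does not vanish at `q = 0` unless `L u ∈ W := span (Dⁱ m)`; so `L u ∈ W` for every `u`.
By the Leibniz rule `L (a y) = ∑ₜ dᵗ(a) vₜ` with `v_k = y`, and the operators `1, d, …, d^k`
are linearly independent over `F` when `d ≠ 0` in characteristic `0`, so `y ∈ W`. Hence
`W = M` and `k = dim M`.
-/

open Finset

section DifferentialModule

variable {F M : Type*} [Semiring F] [AddCommMonoid M] [Module F M] (d : F →+ F) (D : M →+ M)

theorem iterate_smul_eq_sum_antidiagonal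
    (hD : ∀ (a : F) (x : M), D (a • x) = a • D x + d a • x) (n : ℕ) (a : F) (x : M) :
    D^[n] (a • x) = ∑ ij ∈ antidiagonal n, n.choose ij.1 • (d^[ij.1] a • D^[ij.2] x) := by
  induction n with
  | zero => simp
  | succ n ih =>
    rw [sum_antidiagonal_choose_succ_nsmul (fun i j => d^[i] a • D^[j] x) n]
    simp only [Function.iterate_succ_apply', ih, map_sum, map_nsmul, hD, nsmul_add,
      sum_add_distrib]
    congr 1
    refine sum_congr rfl fun ⟨i, j⟩ hij => ?_
    rw [n.choose_symm_of_eq_add (mem_antidiagonal.1 hij).symm]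

theorem iterate_smul_eq_sum_range
    (hD : ∀ (a : F) (x : M), D (a • x) = a • D x + d a • x) {n N : ℕ} (hn : n < N)
    (a : F) (x : M) :
    D^[n] (a • x) = ∑ t ∈ range N, d^[t] a • (n.choose t • D^[n - t] x) := by
  rw [iterate_smul_eq_sum_antidiagonal d D hD,
    Nat.sum_antidiagonal_eq_sum_range_succ (fun i j => n.choose i • (d^[i] a • D^[j] x))]
  refine sum_subset (range_subset_range.2 hn) (fun t _ ht => ?_) |>.trans
    (sum_congr rfl fun t _ => smul_comm _ _ _)
  rw [Nat.choose_eq_zero_of_lt (by simpa using ht), zero_smul]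

theorem iterate_smul_of_map_eq_zero
    (hD : ∀ (a : F) (x : M), D (a • x) = a • D x + d a • x) {q : F} (hq : d q = 0) (n : ℕ)
    (x : M) : D^[n] (q • x) = q • D^[n] x := by
  induction n with
  | zero => rfl
  | succ n ih => simp only [Function.iterate_succ_apply', ih, hD, hq, zero_smul, add_zero]

end DifferentialModule

theorem iterate_sub_sum_smul_eq_sum {F M : Type*} [CommRing F] [AddCommGroup M] [Module F M]
    (d : F →+ F) (D : M →+ M) (hD : ∀ (a : F) (x : M), D (a • x) = a • D x + d a • x)
    (k : ℕ) (β : Fin k → F) (a : F) (y : M) :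
    D^[k] (a • y) - ∑ i, β i • D^[i] (a • y) =
      ∑ t ∈ range (k + 1), d^[t] a •
        (k.choose t • D^[k - t] y - ∑ i : Fin k, β i • ((i : ℕ).choose t • D^[i - t] y)) := by
  have hi : ∀ i : Fin k, D^[i] (a • y) =
      ∑ t ∈ range (k + 1), d^[t] a • ((i : ℕ).choose t • D^[i - t] y) := fun i =>
    iterate_smul_eq_sum_range d D hD (i.isLt.trans k.lt_succ_self) a y
  simp only [hi, iterate_smul_eq_sum_range d D hD k.lt_succ_self, smul_sum, smul_sub,
    sum_sub_distrib, smul_comm (β _)]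
  rw [sum_comm]

theorem AddMonoidHom.map_natCast_of_leibniz {F : Type*} [CommRing F] (d : F →+ F)
    (hleib : ∀ a b : F, d (a * b) = a * d b + b * d a) (n : ℕ) : d n = 0 :=
  (Derivation.mk' d.toIntLinearMap hleib).map_natCast n

theorem eq_zero_of_forall_sum_iterate_smul_eq_zero {F V : Type*} [Field F] [CharZero F]
    [AddCommGroup V] [Module F V] (d : F →+ F) (hleib : ∀ a b : F, d (a * b) = a * d b + b * d a)
    (hd : d ≠ 0) (k : ℕ) (x : ℕ → V) (h : ∀ a, ∑ t ∈ range (k + 1), d^[t] a • x t = 0) :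
    x k = 0 := by
  induction k generalizing x with
  | zero => simpa using h 1
  | succ k ih =>
    obtain ⟨c, hc⟩ := DFunLike.ne_iff.1 hd
    have hdF : ∀ a b : F, d (a • b) = a • d b + d a • b := fun a b => by
      simp only [smul_eq_mul, hleib, mul_comm b]
    -- Substituting `a c` for `a` and subtracting `c` times the relation gives a relation `z` of
    -- order `k` whose top coefficient is `(k + 1) d c • x (k + 1)`.
    set z : ℕ → V := fun t => ∑ s ∈ range (k + 2), (s.choose t • d^[s - t] c) • x s - c • x t
    have hz : ∀ a, ∑ t ∈ range (k + 2), d^[t] a • z t = 0 := fun a => calc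
      _ = ∑ s ∈ range (k + 2), d^[s] (a • c) • x s - c • ∑ t ∈ range (k + 2), d^[t] a • x t := by
        simp only [z, smul_sub, sum_sub_distrib, smul_sum, smul_comm c]
        congr 1
        rw [sum_comm]
        refine sum_congr rfl fun s hs => ?_
        rw [iterate_smul_eq_sum_range d d hdF (mem_range.1 hs), sum_smul]
        simp only [smul_assoc]
      _ = 0 := by rw [h, h, smul_zero, sub_zero]
    have hztop : z (k + 1) = 0 := by
      rw [sub_eq_zero, sum_range_succ, sum_eq_zero fun s hs => by
        rw [Nat.choose_eq_zero_of_lt (mem_range.1 hs), zero_smul, zero_smul]]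
      simp
    have hzk : z k = ((k + 1 : ℕ) • d c) • x (k + 1) := by
      rw [sub_eq_iff_eq_add, sum_range_succ, sum_range_succ, sum_eq_zero fun s hs => by
        rw [Nat.choose_eq_zero_of_lt (mem_range.1 hs), zero_smul, zero_smul]]
      simp [Nat.choose_succ_self_right, add_comm]
    have := ih z fun a => by simpa [sum_range_succ _ (k + 1), hztop] using hz a
    rw [hzk, smul_eq_zero, nsmul_eq_mul] at this
    exact this.resolve_left (mul_ne_zero (Nat.cast_ne_zero.2 k.succ_ne_zero) hc)

theorem linearIndependent_iterate_succ_iff {F M : Type*} [DivisionRing F] [AddCommGroup M]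
    [Module F M] (f : M → M) (k : ℕ) (v : M) :
    LinearIndependent F (fun i : Fin (k + 1) => f^[i] v) ↔
      LinearIndependent F (fun i : Fin k => f^[i] v) ∧
        f^[k] v ∉ Submodule.span F (Set.range fun i : Fin k => f^[i] v) := by
  rw [← Fin.snoc_init_self (fun i : Fin (k + 1) => f^[i] v), linearIndependent_finSnoc]
  rfl

theorem exists_maximal_linearIndependent_iterate {F M : Type*} [DivisionRing F]
    [AddCommGroup M] [Module F M] [FiniteDimensional F M] (f : M → M) :
    ∃ k m, LinearIndependent F (fun i : Fin k => f^[i] m) ∧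
      ∀ v, ¬LinearIndependent F (fun i : Fin (k + 1) => f^[i] v) := by
  classical
  let P k := ∃ m, LinearIndependent F (fun i : Fin k => f^[i] m)
  have hP : ∀ {k}, P k → k ≤ Module.finrank F M := fun ⟨m, hm⟩ => by
    simpa using hm.fintype_card_le_finrank
  obtain ⟨m, hm⟩ : P (Nat.findGreatest P (Module.finrank F M)) :=
    Nat.findGreatest_spec (Nat.zero_le _) ⟨0, linearIndependent_empty_type⟩
  exact ⟨_, m, hm, fun v hv =>
    Nat.findGreatest_is_greatest (Nat.lt_succ_self _) (hP ⟨v, hv⟩) ⟨v, hv⟩⟩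

theorem LinearIndependent.exists_alternatingMap_eq_one {F M : Type*} [Field F] [AddCommGroup M]
    [Module F M] {r : ℕ} {v : Fin r → M} (hv : LinearIndependent F v) :
    ∃ f : M [⋀^Fin r]→ₗ[F] F, f v = 1 := by
  let B := Module.Basis.span hv
  obtain ⟨W, hW⟩ := Submodule.exists_isCompl (Submodule.span F (Set.range v))
  refine ⟨B.det.compLinearMap (Submodule.projectionOnto _ _ hW), ?_⟩
  have hproj : ∀ i, Submodule.projectionOnto _ _ hW (v i) = B i := fun i => by
    ext
    rw [Module.Basis.span_apply]
    exact congrArg Subtype.val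
      (Submodule.projectionOnto_apply_left hW ⟨v i, Submodule.subset_span ⟨i, rfl⟩⟩)
  simp only [AlternatingMap.compLinearMap_apply, hproj, Module.Basis.det_self]

theorem MultilinearMap.exists_polynomial_eval_eq {R ι M : Type*} [CommRing R] [Fintype ι]
    [AddCommMonoid M] [Module R M] (f : MultilinearMap R (fun _ : ι => M) R) (a b : ι → M) :
    ∃ p : Polynomial R, ∀ t : R, p.eval t = f (a + t • b) := by
  classical
  refine ⟨∑ s : Finset ι, Polynomial.C (f (s.piecewise b a)) * Polynomial.X ^ s.card,
    fun t => ?_⟩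
  rw [add_comm, f.map_add_univ]
  simp only [Polynomial.eval_finsetSum, Polynomial.eval_mul, Polynomial.eval_C,
    Polynomial.eval_pow, Polynomial.eval_X]
  refine sum_congr rfl fun s _ => ?_
  have hs : s.piecewise (t • b) a =
      s.piecewise (fun i => t • s.piecewise b a i) (s.piecewise b a) := by
    ext i
    by_cases hi : i ∈ s <;> simp [hi]
  rw [hs, f.map_piecewise_smul]
  simp [prod_const, mul_comm]

theorem MultilinearMap.exists_natCast_map_add_smul_ne_zero {R ι M : Type*} [CommRing R]
    [IsDomain R] [CharZero R] [Fintype ι] [AddCommMonoid M] [Module R M]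
    (f : MultilinearMap R (fun _ : ι => M) R) {a : ι → M} (ha : f a ≠ 0) (b : ι → M) :
    ∃ q : ℕ, q ≠ 0 ∧ f (a + (q : R) • b) ≠ 0 := by
  obtain ⟨p, hp⟩ := f.exists_polynomial_eval_eq a b
  by_contra! h
  have hp0 : p = 0 := by
    refine p.eq_zero_of_infinite_isRoot (Set.infinite_of_injective_forall_mem
      (f := fun q : ℕ => ((q + 1 : ℕ) : R)) (fun m n h => by simpa using h) fun q => ?_)
    simpa [hp] using h (q + 1) q.succ_ne_zero
  exact ha (by simpa [hp0] using (hp 0).symm)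

section CyclicVector

variable {F M : Type*} [Field F] [CharZero F] [AddCommGroup M] [Module F M]
  (d : F →+ F) (D : M →+ M)

theorem iterate_sub_sum_mem_span_of_forall_not_linearIndependent
    (hleib : ∀ a b : F, d (a * b) = a * d b + b * d a)
    (hD : ∀ (a : F) (x : M), D (a • x) = a • D x + d a • x) {k : ℕ} {m : M}
    (hm : LinearIndependent F (fun i : Fin k => D^[i] m)) {β : Fin k → F}
    (hβ : D^[k] m = ∑ i, β i • D^[i] m)
    (hmax : ∀ v, ¬LinearIndependent F (fun i : Fin (k + 1) => D^[i] v)) (u : M) :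
    D^[k] u - ∑ i, β i • D^[i] u ∈ Submodule.span F (Set.range fun i : Fin k => D^[i] m) := by
  set x := D^[k] u - ∑ i, β i • D^[i] u
  by_contra hx
  obtain ⟨f, hf⟩ := (linearIndependent_finSnoc.2 ⟨hm, hx⟩).exists_alternatingMap_eq_one
  obtain ⟨q, hq, hfq⟩ := f.toMultilinearMap.exists_natCast_map_add_smul_ne_zero
    (a := (Fin.snoc (fun i : Fin k => D^[i] m) x : Fin (k + 1) → M)) (by simp [hf])
    (Fin.snoc (fun i : Fin k => D^[i] u) 0 : Fin (k + 1) → M)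
  set v := m + (q : F) • u
  have hiter : ∀ n, D^[n] v = D^[n] m + (q : F) • D^[n] u := fun n => by
    rw [iterate_map_add, iterate_smul_of_map_eq_zero d D hD (d.map_natCast_of_leibniz hleib q)]
  have hsnoc : (Fin.snoc (fun i : Fin k => D^[i] m) x : Fin (k + 1) → M) +
      (q : F) • (Fin.snoc (fun i : Fin k => D^[i] u) 0 : Fin (k + 1) → M) =
      Fin.snoc (fun i : Fin k => D^[i] v) x := by
    ext i
    refine Fin.lastCases ?_ (fun j => ?_) i <;> simp [hiter]
  obtain ⟨hli, hxv⟩ := linearIndependent_finSnoc.1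
    (by_contra fun h => hfq (hsnoc ▸ f.map_linearDependent _ h))
  have hqx : (q : F) • x = D^[k] v - ∑ i, β i • D^[i] v := by
    simp only [x, hiter, hβ, smul_add, sum_add_distrib, smul_sub, smul_sum, smul_comm (q : F)]
    abel
  refine hmax v ((linearIndependent_iterate_succ_iff _ _ _).2 ⟨hli, fun hmem => hxv ?_⟩)
  exact (Submodule.smul_mem_iff _ (Nat.cast_ne_zero.2 hq)).1 (hqx ▸ sub_mem hmem
    (sum_mem fun i _ => Submodule.smul_mem _ _ (Submodule.subset_span ⟨i, rfl⟩)))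

theorem span_iterate_eq_top_of_forall_not_linearIndependent
    (hleib : ∀ a b : F, d (a * b) = a * d b + b * d a) (hd : d ≠ 0)
    (hD : ∀ (a : F) (x : M), D (a • x) = a • D x + d a • x) {k : ℕ} {m : M}
    (hm : LinearIndependent F (fun i : Fin k => D^[i] m))
    (hmax : ∀ v, ¬LinearIndependent F (fun i : Fin (k + 1) => D^[i] v)) :
    Submodule.span F (Set.range fun i : Fin k => D^[i] m) = ⊤ := by
  set W := Submodule.span F (Set.range fun i : Fin k => D^[i] m)
  obtain ⟨β, hβ⟩ := (Submodule.mem_span_range_iff_exists_fun F).1 <| not_not.1 fun h =>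
    hmax m ((linearIndependent_iterate_succ_iff _ _ _).2 ⟨hm, h⟩)
  refine Submodule.eq_top_iff'.2 fun y => ?_
  have hrel : ∀ a, ∑ t ∈ range (k + 1), d^[t] a • W.mkQ (k.choose t • D^[k - t] y -
      ∑ i : Fin k, β i • ((i : ℕ).choose t • D^[i - t] y)) = 0 := fun a => by
    have hmem : _ ∈ W := iterate_sub_sum_mem_span_of_forall_not_linearIndependent d D hleib hD hm
      hβ.symm hmax (a • y)
    rw [iterate_sub_sum_smul_eq_sum d D hD, ← W.ker_mkQ, LinearMap.mem_ker, map_sum] at hmem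
    simpa only [LinearMap.map_smul] using hmem
  simpa [Nat.choose_eq_zero_of_lt] using
    eq_zero_of_forall_sum_iterate_smul_eq_zero d hleib hd k _ hrel

end CyclicVector

/-- **Cyclic vector theorem.** Over a differential field `(F, d)` of
characteristic `0` with `d ≠ 0`, every finite-dimensional differential module
`(M, D)` admits a cyclic vector `m`: the iterates `m, D m, …, D^{n-1} m`
(`n = dim_F M`) form a basis of `M`. -/
theorem exists_cyclic_vector
    {F M : Type*} [Field F] [CharZero F]
    (d : F →+ F) (hleib : ∀ a b : F, d (a * b) = a * d b + b * d a) (hd : d ≠ 0)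
    [AddCommGroup M] [Module F M] [FiniteDimensional F M]
    (D : M →+ M) (hD : ∀ (a : F) (x : M), D (a • x) = a • D x + d a • x) :
    ∃ m : M,
      LinearIndependent F (fun i : Fin (Module.finrank F M) => (⇑D)^[(i : ℕ)] m) ∧
      Submodule.span F (Set.range (fun i : Fin (Module.finrank F M) => (⇑D)^[(i : ℕ)] m)) = ⊤ := by
  obtain ⟨k, m, hm, hmax⟩ := exists_maximal_linearIndependent_iterate (F := F) D
  have htop := span_iterate_eq_top_of_forall_not_linearIndependent d D hleib hd hD hm hmax
  obtain rfl : k = Module.finrank F M := by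
    rw [← finrank_top F M, ← htop, finrank_span_eq_card hm, Fintype.card_fin]
  exact ⟨m, hm, htop⟩
end

section
/- Let p be prime, n coprime to p, a the order of p modulo n, q = p^a, and ζ̄ ∈ F_q^× an element of multiplicative order n. Let G = F_q ⋊ ℤ/nℤ, where i ∈ ℤ/nℤ acts on F_q (as additive group) by multiplication by ζ̄^{-i}. Then every normal subgroup N of G contained in F_q × {0} is either trivial or equal to F_q × {0}. In other words, F_q is an irreducible F_p[ℤ/nℤ]-module under this action. -/
/-!
An additive subgroup of `K` stable under multiplication by `ζ` is stable under multiplication by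
the subring `𝔽_p[ζ]`, so it suffices to show `𝔽_p[ζ] = K`. If `𝔽_p[ζ]` has `p ^ d` elements then
`ζ ^ (p ^ d - 1) = 1`, i.e. `p ^ d ≡ 1 [MOD n]`, so the order `a` of `p` modulo `n` divides `d`;
as `p ^ d ≤ |K| = p ^ a`, we get `d = a` and `𝔽_p[ζ] = K`.
-/

theorem FiniteField.natCast_card_eq_one_of_ne_zero {F : Type*} [Field F] [Fintype F] {ζ : F}
    (hζ : ζ ≠ 0) : (Fintype.card F : ZMod (orderOf ζ)) = 1 := by
  have h : orderOf ζ ∣ Fintype.card F - 1 :=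
    orderOf_dvd_of_pow_eq_one (FiniteField.pow_card_sub_one_eq_one ζ hζ)
  rw [← Nat.sub_add_cancel Fintype.card_pos, Nat.cast_add, (ZMod.natCast_eq_zero_iff _ _).2 h,
    zero_add, Nat.cast_one]

theorem FiniteField.closure_singleton_eq_top {K : Type*} [Field K] [Fintype K] {p : ℕ} [CharP K p]
    {ζ : K} (hζ : ζ ≠ 0) (hK : Fintype.card K = p ^ orderOf (p : ZMod (orderOf ζ))) :
    Subring.closure {ζ} = ⊤ := by
  classical
  set F := Subring.closure {ζ}
  let _ : Field F := (Finite.isField_of_domain F).toField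
  obtain ⟨d, hp, hF⟩ := FiniteField.card F p
  let ζ' : F := ⟨ζ, Subring.subset_closure rfl⟩
  have hζ' : orderOf ζ' = orderOf ζ :=
    (orderOf_injective F.subtype.toMonoidHom Subtype.coe_injective ζ').symm
  have hdvd : orderOf (p : ZMod (orderOf ζ)) ∣ d := by
    apply orderOf_dvd_of_pow_eq_one
    have := FiniteField.natCast_card_eq_one_of_ne_zero (ζ := ζ') (Subtype.coe_ne_coe.mp hζ)
    rwa [hF, hζ', Nat.cast_pow] at this
  have hle : (d : ℕ) ≤ orderOf (p : ZMod (orderOf ζ)) := by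
    rw [← Nat.pow_le_pow_iff_right hp.one_lt, ← hF, ← hK]
    exact Fintype.card_subtype_le _
  have hcard : Nat.card F = Nat.card K := by
    rw [Nat.card_eq_fintype_card, Nat.card_eq_fintype_card, hF, hK,
      hle.antisymm (Nat.le_of_dvd d.pos hdvd)]
  exact Subring.toAddSubgroup_injective (AddSubgroup.eq_top_of_card_eq F.toAddSubgroup hcard)

theorem AddSubgroup.mul_mem_of_mem_closure {R : Type*} [Ring R] {N : AddSubgroup R} {s : Set R}
    (hs : ∀ c ∈ s, ∀ y ∈ N, c * y ∈ N) {c : R} (hc : c ∈ Subring.closure s) :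
    ∀ y ∈ N, c * y ∈ N := by
  induction hc using Subring.closure_induction with
  | mem c hc => exact hs c hc
  | zero => simp
  | one => simp
  | add c c' _ _ h h' => exact fun y hy ↦ by rw [add_mul]; exact N.add_mem (h y hy) (h' y hy)
  | neg c _ h => exact fun y hy ↦ by rw [neg_mul]; exact N.neg_mem (h y hy)
  | mul c c' _ _ h h' => exact fun y hy ↦ by rw [mul_assoc]; exact h _ (h' y hy)

theorem AddSubgroup.eq_bot_or_top_of_mul_mem {K : Type*} [DivisionRing K] (N : AddSubgroup K)
    (hN : ∀ (c : K), ∀ y ∈ N, c * y ∈ N) : N = ⊥ ∨ N = ⊤ :=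
  (Ideal.eq_bot_or_top ({ N with smul_mem' := hN } : Ideal K)).imp
    (fun h ↦ congrArg Submodule.toAddSubgroup h) (fun h ↦ congrArg Submodule.toAddSubgroup h)

theorem Fq_irreducible_under_zeta_general
    (p n a : ℕ) (hp : p.Prime) (hn : 0 < n)
    (ha : orderOf ((p : ZMod n)) = a)
    (K : Type*) [Field K] [Fintype K] (hK : Fintype.card K = p ^ a)
    (ζ : K) (hζ : orderOf ζ = n) :
    ∀ N : AddSubgroup K, (∀ x ∈ N, ζ * x ∈ N) → N = ⊥ ∨ N = ⊤ := by
  intro N hN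
  have hζ0 : ζ ≠ 0 := by
    rintro rfl
    rw [orderOf_zero] at hζ
    omega
  have : Fact p.Prime := ⟨hp⟩
  have : CharP K p := charP_of_card_eq_prime_pow hK
  subst hζ ha
  have hF := FiniteField.closure_singleton_eq_top hζ0 hK
  exact N.eq_bot_or_top_of_mul_mem fun c ↦
    N.mul_mem_of_mem_closure (by simpa using hN) (hF ▸ Subring.mem_top c)

/-- Let `K = F_q` (`q = p^a`, `a` the order of `p` mod `n`,
`gcd(n,p)=1`) and `ζ ∈ K` of multiplicative order `n`.  In the semidirect
product `G = F_q ⋊ ℤ/nℤ` (with `i` acting by multiplication by `ζ^{-i}`), every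
normal subgroup contained in `F_q × {0}` is trivial or all of `F_q × {0}`; in
other words, `F_q` is an irreducible `F_p[ℤ/nℤ]`-module for this action:
every additive subgroup of `K` stable under multiplication by `ζ` is `⊥` or `⊤`. -/
theorem Fq_irreducible_under_zeta
    (p n a : ℕ) (hp : p.Prime) (hn : 0 < n) (hcop : Nat.Coprime n p)
    (ha : orderOf ((p : ZMod n)) = a)
    (K : Type*) [Field K] [Fintype K] (hK : Fintype.card K = p ^ a)
    (ζ : K) (hζ : orderOf ζ = n) :
    ∀ N : AddSubgroup K, (∀ x ∈ N, ζ * x ∈ N) → N = ⊥ ∨ N = ⊤ :=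
  Fq_irreducible_under_zeta_general p n a hp hn ha K hK ζ hζ
end

section
/- Let p be prime, n coprime to p, a the order of p modulo n, q = p^a, and ζ̄ ∈ F_q^× of order n. Let G = F_q ⋊ ℤ/nℤ with i acting by multiplication by ζ̄^{-i}. Then every quotient group of G is isomorphic either to G itself or to a quotient of ℤ/nℤ. Equivalently, every normal subgroup of G either contains F_q × {0} or is trivial. -/
/-!
A nontrivial normal subgroup `N` meets `F_q` nontrivially: it contains either a nonzero
`(α, 0)`, or some `(α, i)` with `i ≠ 0`, whose commutator with `(1, 0)` is
`(1 - ζ^{-i}, 0)`, and `ζ^{-i} ≠ 1`. The additive subgroup `S = N ∩ F_q` is stable under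
multiplication by `ζ^{-1}`, so its multipliers `{c | c S ⊆ S}` form a subfield containing `ζ`.
A subfield `F_{p^b}` containing an element of order `n` has `n ∣ p^b - 1`, so `a ∣ b`; hence
the multipliers are all of `F_q`, and `S = F_q`.
-/

open SemidirectProduct

theorem FiniteField.closure_singleton_eq_top_of_card_eq {K : Type*} [Field K] [Fintype K]
    {p : ℕ} [Fact p.Prime] {ζ : K} (hζ : IsOfFinOrder ζ)
    (hK : Fintype.card K = p ^ orderOf (p : ZMod (orderOf ζ))) :
    Subfield.closure {ζ} = ⊤ := by
  have := charP_of_card_eq_prime_pow hK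
  set D := Subfield.closure {ζ}
  have : Fintype D := Fintype.ofFinite D
  obtain ⟨b, -, hD⟩ := FiniteField.card D p
  have hfrob : ζ ^ p ^ (b : ℕ) = ζ ^ 1 := by
    rw [← hD, pow_one]
    exact congrArg Subtype.val (FiniteField.pow_card (⟨ζ, Subfield.subset_closure rfl⟩ : D))
  have hdvd : orderOf (p : ZMod (orderOf ζ)) ∣ b := by
    apply orderOf_dvd_of_pow_eq_one
    exact_mod_cast (ZMod.natCast_eq_natCast_iff _ _ _).2 (hζ.pow_eq_pow_iff_modEq.1 hfrob)
  have hle : p ^ (b : ℕ) ≤ p ^ orderOf (p : ZMod (orderOf ζ)) := by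
    rw [← hD, ← hK]; exact Fintype.card_le_of_injective _ Subtype.val_injective
  have hb : (b : ℕ) = orderOf (p : ZMod (orderOf ζ)) :=
    le_antisymm ((Nat.pow_le_pow_iff_right (Fact.out : p.Prime).one_lt).1 hle)
      (Nat.le_of_dvd b.pos hdvd)
  have hcard : Nat.card D = Nat.card K := by
    rw [Nat.card_eq_fintype_card, Nat.card_eq_fintype_card, hD, hb, hK]
  exact SetLike.coe_injective (Set.eq_top_of_card_le_of_finite hcard.ge)

namespace AddSubgroup

variable {K : Type*} [Field K] [Fintype K]

def multiplierSubring {R : Type*} [Ring R] (S : AddSubgroup R) : Subring R where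
  carrier := {c | ∀ s ∈ S, c * s ∈ S}
  zero_mem' s _ := by simp [S.zero_mem]
  one_mem' s hs := by simpa using hs
  add_mem' hc hd s hs := by simpa [add_mul] using S.add_mem (hc s hs) (hd s hs)
  neg_mem' hc s hs := by simp [S.neg_mem (hc s hs)]
  mul_mem' hc hd s hs := by simp [mul_assoc, hc _ (hd s hs)]

def multiplierSubfield (S : AddSubgroup K) : Subfield K where
  __ := S.multiplierSubring
  inv_mem' c hc := by
    obtain rfl | hc0 := eq_or_ne c 0
    · simp
    have hinv : c⁻¹ = c ^ (Fintype.card K - 1 - 1) := by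
      rw [pow_sub₀ c hc0 (Nat.le_sub_of_add_le Fintype.one_lt_card),
        FiniteField.pow_card_sub_one_eq_one c hc0, pow_one, one_mul]
    exact hinv ▸ S.multiplierSubring.pow_mem hc _

theorem mem_multiplierSubfield {S : AddSubgroup K} {c : K} :
    c ∈ S.multiplierSubfield ↔ ∀ s ∈ S, c * s ∈ S :=
  Iff.rfl

theorem eq_top_of_multiplierSubfield_eq_top {S : AddSubgroup K} (hS : S ≠ ⊥)
    (h : S.multiplierSubfield = ⊤) : S = ⊤ := by
  obtain ⟨x, hx, hx0⟩ := S.bot_or_exists_ne_zero.resolve_left hS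
  refine eq_top_iff.2 fun y _ => ?_
  have hyx : y * x⁻¹ ∈ S.multiplierSubfield := h ▸ Subfield.mem_top _
  simpa [hx0] using mem_multiplierSubfield.1 hyx x hx

end AddSubgroup

namespace SemidirectProduct

variable {N G : Type*} [CommGroup N] [Group G] {φ : G →* MulAut N}

theorem mul_inl_mul_inv (g : N ⋊[φ] G) (n : N) : g * inl n * g⁻¹ = inl (φ g.right n) := by
  ext <;> simp [mul_comm]

theorem inl_mul_inv_aut_mem {H : Subgroup (N ⋊[φ] G)} (hH : H.Normal) {g : N ⋊[φ] G}
    (hg : g ∈ H) (m : N) : inl (m * (φ g.right m)⁻¹) ∈ H := by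
  have : inl (m * (φ g.right m)⁻¹) = inl m * g * (inl m)⁻¹ * g⁻¹ := by
    rw [mul_assoc (inl m), mul_assoc (inl m), ← map_inv inl, mul_inl_mul_inv, ← map_mul,
      map_inv]
  rw [this]
  exact H.mul_mem (hH.conj_mem g hg _) (H.inv_mem hg)

theorem exists_inl_ne_one_mem_of_injective (hφ : Function.Injective φ)
    {H : Subgroup (N ⋊[φ] G)} (hH : H.Normal) (hbot : H ≠ ⊥) : ∃ m ≠ 1, inl m ∈ H := by
  obtain ⟨g, hg, hg1⟩ := H.bot_or_exists_ne_one.resolve_left hbot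
  by_cases hr : g.right = 1
  · have hg_eq : inl g.left = g := by simpa [hr] using inl_left_mul_inr_right g
    exact ⟨g.left, fun h => hg1 (by simpa [h] using hg_eq.symm), hg_eq ▸ hg⟩
  · obtain ⟨m, hm⟩ : ∃ m, φ g.right m ≠ m := by
      by_contra! h
      exact hr (hφ (by ext m; simpa using h m))
    exact ⟨_, mul_inv_eq_one.not.2 (Ne.symm hm), inl_mul_inv_aut_mem hH hg m⟩

end SemidirectProduct

theorem injective_of_apply_ofAdd_eq_inv_pow_mul {n : ℕ} [NeZero n] {K : Type*} [Field K]
    {ζ : K} (hζ : orderOf ζ = n) {φ : Multiplicative (ZMod n) →* MulAut (Multiplicative K)}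
    (hφ : ∀ (i : ℕ) (x : K), φ (Multiplicative.ofAdd (i : ZMod n)) (Multiplicative.ofAdd x) =
      Multiplicative.ofAdd (ζ⁻¹ ^ i * x)) :
    Function.Injective φ := by
  refine (injective_iff_map_eq_one φ).2 fun j hj => ?_
  obtain ⟨i, hi⟩ := ZMod.natCast_zmod_surjective (Multiplicative.toAdd j)
  have h1 := hφ i 1
  rw [hi, ofAdd_toAdd, hj, MulAut.one_apply, mul_one] at h1
  have hζi : ζ ^ i = 1 := by simpa using (Multiplicative.ofAdd.injective h1).symm
  rw [← orderOf_dvd_iff_pow_eq_one, hζ, ← ZMod.natCast_eq_zero_iff, hi] at hζi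
  simpa using congrArg Multiplicative.ofAdd hζi

theorem normal_subgroup_semidirect_trivial_or_contains_Fq_general
    (p n a : ℕ) (hp : p.Prime) (hn : 0 < n)
    (ha : orderOf ((p : ZMod n)) = a)
    (K : Type*) [Field K] [Fintype K] (hK : Fintype.card K = p ^ a)
    (ζ : K) (hζ : orderOf ζ = n)
    (φ : Multiplicative (ZMod n) →* MulAut (Multiplicative K))
    (hφ : ∀ (i : ℕ) (x : K),
      φ (Multiplicative.ofAdd ((i : ZMod n))) (Multiplicative.ofAdd x) =
        Multiplicative.ofAdd (ζ⁻¹ ^ i * x)) :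
    ∀ N : Subgroup (SemidirectProduct (Multiplicative K) (Multiplicative (ZMod n)) φ),
      N.Normal → N = ⊥ ∨
        (SemidirectProduct.inl :
          Multiplicative K →* SemidirectProduct (Multiplicative K) (Multiplicative (ZMod n)) φ).range ≤ N := by
  intro N hN
  refine or_iff_not_imp_left.2 fun hbot => ?_
  have : NeZero n := ⟨hn.ne'⟩
  have : Fact p.Prime := ⟨hp⟩
  have hφinj := injective_of_apply_ofAdd_eq_inv_pow_mul hζ hφ
  set S := (N.comap inl).toAddSubgroup'
  have hmemS (x : K) : x ∈ S ↔ inl (Multiplicative.ofAdd x) ∈ N := Iff.rfl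
  have hS : S ≠ ⊥ := by
    obtain ⟨m, hm, hmN⟩ := exists_inl_ne_one_mem_of_injective hφinj hN hbot
    exact S.ne_bot_iff_exists_ne_zero.2 ⟨⟨m.toAdd, (hmemS _).2 hmN⟩, by simpa using hm⟩
  have hζS : ζ⁻¹ ∈ S.multiplierSubfield := fun s hs => by
    have := hN.conj_mem _ ((hmemS s).1 hs) (inr (Multiplicative.ofAdd ((1 : ℕ) : ZMod n)))
    rwa [mul_inl_mul_inv, right_inr, hφ, pow_one, ← hmemS] at this
  have hclosure : Subfield.closure {ζ} = ⊤ :=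
    FiniteField.closure_singleton_eq_top_of_card_eq (orderOf_pos_iff.1 (hζ ▸ hn))
      (by subst hζ ha; exact hK)
  have hStop : S = ⊤ := S.eq_top_of_multiplierSubfield_eq_top hS <| top_le_iff.1 <|
    hclosure ▸ Subfield.closure_le.2 (by simpa using inv_mem hζS)
  rintro _ ⟨m, rfl⟩
  exact (hmemS m.toAdd).1 (hStop ▸ AddSubgroup.mem_top _)

/-- Let `G = F_q ⋊ ℤ/nℤ` with `i` acting on the additive group
of `F_q` by multiplication by `ζ^{-i}`, where `ζ ∈ F_q^×` has order `n`
(`q = p^a`, `a` the order of `p` mod `n`, `gcd(n,p)=1`).  Then every normal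
subgroup of `G` either is trivial or contains `F_q × {0}`; equivalently, every
quotient of `G` is isomorphic to `G` itself or to a quotient of `ℤ/nℤ`. -/
theorem normal_subgroup_semidirect_trivial_or_contains_Fq
    (p n a : ℕ) (hp : p.Prime) (hn : 0 < n) (hcop : Nat.Coprime n p)
    (ha : orderOf ((p : ZMod n)) = a)
    (K : Type*) [Field K] [Fintype K] (hK : Fintype.card K = p ^ a)
    (ζ : K) (hζ : orderOf ζ = n)
    (φ : Multiplicative (ZMod n) →* MulAut (Multiplicative K))
    (hφ : ∀ (i : ℕ) (x : K),
      φ (Multiplicative.ofAdd ((i : ZMod n))) (Multiplicative.ofAdd x) =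
        Multiplicative.ofAdd (ζ⁻¹ ^ i * x)) :
    ∀ N : Subgroup (SemidirectProduct (Multiplicative K) (Multiplicative (ZMod n)) φ),
      N.Normal → N = ⊥ ∨
        (SemidirectProduct.inl :
          Multiplicative K →* SemidirectProduct (Multiplicative K) (Multiplicative (ZMod n)) φ).range ≤ N :=
  normal_subgroup_semidirect_trivial_or_contains_Fq_general p n a hp hn ha K hK ζ hζ φ hφ
end

section
/- Let v be a real-valued valuation on a field K and let ℓ = ∑_{i=0}^n a_i T^i be monic of degree n ≥ 1 over K. An integer m with -n < m < 0 is a break of the Newton polygon of ℓ (lower convex hull of (-i, v(a_i))) if and only if the point (m, v(a_{-m})) lies on the polygon and the polygon has strictly smaller slope on [m-1,m] than on [m,m+1]. Show: if for all j with m_s ≤ j < m_{s+1} we have (v(a_{-j}) − v(a_{-m_{s+1}}))/(j − m_{s+1}) ≤ (v(a_{-m_s}) − v(a_{-m_{s+1}}))/(m_s − m_{s+1}), and for all j with m_{s+1} < j ≤ 0 the strict reverse inequality holds, then m_{s+1} is the smallest break of the Newton polygon strictly larger than m_s. -/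
/-!
Let `L` be the line through `(mₛ, P mₛ)` and `(mₛ₊₁, P mₛ₊₁)`. The slope hypotheses say that
every point `(j, P j)` with `j ≥ mₛ` lies on or above `L`, strictly above it when `j > mₛ₊₁`.
Since `mₛ` is a break, the hull lies strictly above `L` at `mₛ - 1` (if `mₛ > -n`), so every
chord through an abscissa `m ≥ mₛ` lies above `L` at `m` as well (strictly if `m > mₛ₊₁`).
Hence the hull coincides with `L` on `[mₛ, mₛ₊₁]`, has constant slope there, and its slope
jumps at `mₛ₊₁`.
-/

/-- Value at integer abscissa `m ∈ [-n, 0]` of the lower convex hull of the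
real points `(j, P j)`, `-n ≤ j ≤ 0`. -/
noncomputable def npHullRAt (n : ℕ) (P : ℤ → ℝ) (m : ℤ) : ℝ :=
  min (P m) (sInf {y : ℝ | ∃ i₁ i₂ : ℤ, -(n : ℤ) ≤ i₁ ∧ i₁ ≤ m ∧ m ≤ i₂ ∧ i₂ ≤ 0 ∧ i₁ < i₂ ∧
    y = (((i₂ : ℝ) - (m : ℝ)) / ((i₂ : ℝ) - (i₁ : ℝ))) * P i₁ +
        (((m : ℝ) - (i₁ : ℝ)) / ((i₂ : ℝ) - (i₁ : ℝ))) * P i₂})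

/-- `m` is a break of the Newton polygon with points `(j, P j)`, `-n ≤ j ≤ 0`:
either an endpoint, or an interior integer where the slope strictly increases. -/
def IsNPBreak (n : ℕ) (P : ℤ → ℝ) (m : ℤ) : Prop :=
  m = -(n : ℤ) ∨ m = 0 ∨
    (-(n : ℤ) < m ∧ m < 0 ∧
      npHullRAt n P m - npHullRAt n P (m - 1) < npHullRAt n P (m + 1) - npHullRAt n P m)

namespace NewtonPolygon

/-- Written exactly as the points of the set in `npHullRAt`, so that this set unfolds to
`{y | ∃ i₁ i₂, … ∧ y = chord P i₁ i₂ m}`; it is junk (zero) when `i₁ = i₂`. -/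
noncomputable def chord (P : ℤ → ℝ) (i₁ i₂ m : ℤ) : ℝ :=
  (((i₂ : ℝ) - (m : ℝ)) / ((i₂ : ℝ) - (i₁ : ℝ))) * P i₁ +
    (((m : ℝ) - (i₁ : ℝ)) / ((i₂ : ℝ) - (i₁ : ℝ))) * P i₂

section Chord

variable {P Q : ℤ → ℝ} {i₁ i₂ j₁ j₂ j m : ℤ}

theorem chord_left (h : i₁ ≠ i₂) : chord P i₁ i₂ i₁ = P i₁ := by
  have hd : (i₂ : ℝ) - i₁ ≠ 0 := sub_ne_zero.2 (by exact_mod_cast h.symm)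
  simp [chord, hd]

theorem chord_right (h : i₁ ≠ i₂) : chord P i₁ i₂ i₂ = P i₂ := by
  have hd : (i₂ : ℝ) - i₁ ≠ 0 := sub_ne_zero.2 (by exact_mod_cast h.symm)
  simp [chord, hd]

theorem chord_chord (h : j₁ ≠ j₂) : chord (chord P i₁ i₂) j₁ j₂ m = chord P i₁ i₂ m := by
  have hd : (j₂ : ℝ) - j₁ ≠ 0 := sub_ne_zero.2 (by exact_mod_cast h.symm)
  unfold chord
  field_simp
  ring

theorem chord_sub_one_add_chord_add_one :
    chord P i₁ i₂ (m - 1) + chord P i₁ i₂ (m + 1) = 2 * chord P i₁ i₂ m := by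
  unfold chord
  push_cast
  ring

theorem chord_eq_add_slope_mul (h : i₁ ≠ i₂) :
    chord P i₁ i₂ m = P i₂ + (P i₁ - P i₂) / ((i₁ : ℝ) - i₂) * ((m : ℝ) - i₂) := by
  have hd : (i₂ : ℝ) - i₁ ≠ 0 := sub_ne_zero.2 (by exact_mod_cast h.symm)
  have hd' : (i₁ : ℝ) - i₂ ≠ 0 := sub_ne_zero.2 (by exact_mod_cast h)
  unfold chord
  field_simp
  ring

theorem chord_le_chord (hm₁ : i₁ ≤ m) (hm₂ : m ≤ i₂) (h₁ : Q i₁ ≤ P i₁) (h₂ : Q i₂ ≤ P i₂) :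
    chord Q i₁ i₂ m ≤ chord P i₁ i₂ m := by
  have hm₁ : (i₁ : ℝ) ≤ m := by exact_mod_cast hm₁
  have hm₂ : (m : ℝ) ≤ i₂ := by exact_mod_cast hm₂
  have hw₁ : 0 ≤ ((i₂ : ℝ) - m) / ((i₂ : ℝ) - i₁) := div_nonneg (by linarith) (by linarith)
  have hw₂ : 0 ≤ ((m : ℝ) - i₁) / ((i₂ : ℝ) - i₁) := div_nonneg (by linarith) (by linarith)
  unfold chord
  exact add_le_add (mul_le_mul_of_nonneg_left h₁ hw₁) (mul_le_mul_of_nonneg_left h₂ hw₂)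

theorem chord_lt_chord (hm₁ : i₁ < m) (hm₂ : m ≤ i₂) (h₁ : Q i₁ ≤ P i₁) (h₂ : Q i₂ < P i₂) :
    chord Q i₁ i₂ m < chord P i₁ i₂ m := by
  have hm₁ : (i₁ : ℝ) < m := by exact_mod_cast hm₁
  have hm₂ : (m : ℝ) ≤ i₂ := by exact_mod_cast hm₂
  have hw₁ : 0 ≤ ((i₂ : ℝ) - m) / ((i₂ : ℝ) - i₁) := div_nonneg (by linarith) (by linarith)
  have hw₂ : 0 < ((m : ℝ) - i₁) / ((i₂ : ℝ) - i₁) := div_pos (by linarith) (by linarith)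
  unfold chord
  exact add_lt_add_of_le_of_lt (mul_le_mul_of_nonneg_left h₁ hw₁) (mul_lt_mul_of_pos_left h₂ hw₂)

theorem chord_le_of_slope_le (h : i₁ ≠ i₂) (hj : j < i₂)
    (hslope : (P j - P i₂) / ((j : ℝ) - i₂) ≤ (P i₁ - P i₂) / ((i₁ : ℝ) - i₂)) :
    chord P i₁ i₂ j ≤ P j := by
  have hj : (j : ℝ) - i₂ < 0 := sub_neg.2 (by exact_mod_cast hj)
  rw [div_le_iff_of_neg hj] at hslope
  rw [chord_eq_add_slope_mul h]
  linarith

theorem chord_lt_of_slope_lt (h : i₁ ≠ i₂) (hj : i₂ < j)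
    (hslope : (P i₁ - P i₂) / ((i₁ : ℝ) - i₂) < (P j - P i₂) / ((j : ℝ) - i₂)) :
    chord P i₁ i₂ j < P j := by
  have hj : 0 < (j : ℝ) - i₂ := sub_pos.2 (by exact_mod_cast hj)
  rw [lt_div_iff₀ hj] at hslope
  rw [chord_eq_add_slope_mul h]
  linarith

end Chord

section Hull

variable {n : ℕ} {P : ℤ → ℝ} {i₁ i₂ m : ℤ}

def chordValues (n : ℕ) (P : ℤ → ℝ) (m : ℤ) : Set ℝ :=
  {y | ∃ i₁ i₂ : ℤ, -(n : ℤ) ≤ i₁ ∧ i₁ ≤ m ∧ m ≤ i₂ ∧ i₂ ≤ 0 ∧ i₁ < i₂ ∧ y = chord P i₁ i₂ m}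

theorem npHullRAt_eq_min : npHullRAt n P m = min (P m) (sInf (chordValues n P m)) := rfl

theorem chordValues_finite : (chordValues n P m).Finite := by
  refine (((Set.finite_Icc (-(n : ℤ)) 0).prod (Set.finite_Icc (-(n : ℤ)) 0)).image
    (fun i : ℤ × ℤ => chord P i.1 i.2 m)).subset ?_
  rintro y ⟨i₁, i₂, hi₁, hm₁, hm₂, hi₂, -, rfl⟩
  exact ⟨(i₁, i₂), ⟨⟨hi₁, by omega⟩, ⟨by omega, hi₂⟩⟩, rfl⟩

theorem npHullRAt_le_chord (hi₁ : -(n : ℤ) ≤ i₁) (hm₁ : i₁ ≤ m) (hm₂ : m ≤ i₂) (hi₂ : i₂ ≤ 0)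
    (hi : i₁ < i₂) : npHullRAt n P m ≤ chord P i₁ i₂ m :=
  (min_le_right _ _).trans
    (csInf_le chordValues_finite.bddBelow ⟨i₁, i₂, hi₁, hm₁, hm₂, hi₂, hi, rfl⟩)

theorem npHullRAt_eq_self_or_chord (hn : 0 < n) (hm₁ : -(n : ℤ) ≤ m) (hm₂ : m ≤ 0) :
    npHullRAt n P m = P m ∨ ∃ i₁ i₂ : ℤ, -(n : ℤ) ≤ i₁ ∧ i₁ < m ∧ m < i₂ ∧ i₂ ≤ 0 ∧
      npHullRAt n P m = chord P i₁ i₂ m := by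
  rw [npHullRAt_eq_min]
  rcases le_total (P m) (sInf (chordValues n P m)) with h | h
  · exact Or.inl (min_eq_left h)
  have hne : (chordValues n P m).Nonempty :=
    ⟨_, -(n : ℤ), 0, le_rfl, hm₁, hm₂, le_rfl, by omega, rfl⟩
  obtain ⟨i₁, i₂, hi₁, hm₁, hm₂, hi₂, hi, hy⟩ := hne.csInf_mem chordValues_finite
  rw [min_eq_right h, hy]
  rcases hm₁.eq_or_lt with rfl | hm₁
  · exact Or.inl (chord_left hi.ne)
  rcases hm₂.eq_or_lt with rfl | hm₂
  · exact Or.inl (chord_right hi.ne)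
  exact Or.inr ⟨i₁, i₂, hi₁, hm₁, hm₂, hi₂, rfl⟩

theorem _root_.IsNPBreak.neg_le (h : IsNPBreak n P m) : -(n : ℤ) ≤ m := by
  rcases h with rfl | rfl | ⟨h, -⟩ <;> omega

theorem isNPBreak_iff_of_lt_of_lt (hm₁ : -(n : ℤ) < m) (hm₂ : m < 0) :
    IsNPBreak n P m ↔
      npHullRAt n P m - npHullRAt n P (m - 1) < npHullRAt n P (m + 1) - npHullRAt n P m := by
  unfold IsNPBreak
  constructor
  · rintro (rfl | rfl | ⟨-, -, h⟩)
    · omega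
    · omega
    · exact h
  · exact fun h => Or.inr (Or.inr ⟨hm₁, hm₂, h⟩)

theorem npHullRAt_eq_self_of_isNPBreak (hm₁ : -(n : ℤ) < m) (hm₂ : m < 0)
    (hbreak : IsNPBreak n P m) : npHullRAt n P m = P m := by
  rw [isNPBreak_iff_of_lt_of_lt hm₁ hm₂] at hbreak
  rcases npHullRAt_eq_self_or_chord (by omega) hm₁.le hm₂.le with
    h | ⟨i₁, i₂, hi₁, hm₁, hm₂, hi₂, h⟩
  · exact h
  -- the hull meets this chord at `m` and lies below it at `m ± 1`, so it is not strictly convex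
  have hl := npHullRAt_le_chord (P := P) hi₁ (by omega : i₁ ≤ m - 1) (by omega) hi₂ (by omega)
  have hr := npHullRAt_le_chord (P := P) hi₁ (by omega : i₁ ≤ m + 1) (by omega) hi₂ (by omega)
  linarith [chord_sub_one_add_chord_add_one (P := P) (i₁ := i₁) (i₂ := i₂) (m := m)]

theorem chord_sub_one_lt_npHullRAt {a b : ℤ} (hbreak : IsNPBreak n P a) (ha : -(n : ℤ) < a)
    (hab : a < b) (hb : b ≤ 0) : chord P a b (a - 1) < npHullRAt n P (a - 1) := by
  have hself := npHullRAt_eq_self_of_isNPBreak ha (by omega) hbreak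
  rw [isNPBreak_iff_of_lt_of_lt ha (by omega), hself] at hbreak
  have hr := npHullRAt_le_chord (P := P) ha.le (by omega : a ≤ a + 1) (by omega) hb hab
  linarith [chord_sub_one_add_chord_add_one (P := P) (i₁ := a) (i₂ := b) (m := a),
    chord_left (P := P) hab.ne]

end Hull

section Support

variable {n : ℕ} {P : ℤ → ℝ} {a b i₁ i₂ m : ℤ}

/-- The witness is the chord's left end if that is `≥ a`, and otherwise `a - 1`, where the break
at `a` puts the hull strictly above the line `chord P a b`. -/
theorem exists_lt_chord_le_chord (hbreak : IsNPBreak n P a) (hab : a < b) (hb : b ≤ 0)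
    (hle : ∀ j, a ≤ j → j ≤ 0 → chord P a b j ≤ P j) (hi₁ : -(n : ℤ) ≤ i₁) (him : i₁ < m)
    (ham : a ≤ m) (hmi : m < i₂) (hi₂ : i₂ ≤ 0) :
    ∃ j < m, chord P a b j ≤ chord P i₁ i₂ j := by
  rcases lt_or_ge i₁ a with hi₁a | hai₁
  · refine ⟨a - 1, by omega, (chord_sub_one_lt_npHullRAt hbreak (by omega) hab hb).le.trans ?_⟩
    exact npHullRAt_le_chord hi₁ (by omega) (by omega) hi₂ (by omega)
  · refine ⟨i₁, him, ?_⟩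
    rw [chord_left (by omega : i₁ ≠ i₂)]
    exact hle i₁ hai₁ (by omega)

theorem chord_le_npHullRAt_of_isNPBreak (hbreak : IsNPBreak n P a) (hab : a < b) (hb : b ≤ 0)
    (hle : ∀ j, a ≤ j → j ≤ 0 → chord P a b j ≤ P j)
    (ham : a ≤ m) (hm : m ≤ 0) : chord P a b m ≤ npHullRAt n P m := by
  have ha := hbreak.neg_le
  rcases npHullRAt_eq_self_or_chord (n := n) (P := P) (by omega) (by omega) hm with
    h | ⟨i₁, i₂, hi₁, him, hmi, hi₂, h⟩
  · exact h ▸ hle m ham hm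
  obtain ⟨j, hjm, hj⟩ := exists_lt_chord_le_chord hbreak hab hb hle hi₁ him ham hmi hi₂
  have hji : j ≠ i₂ := by omega
  have hi₂' : chord P a b i₂ ≤ chord P i₁ i₂ i₂ := by
    rw [chord_right (by omega : i₁ ≠ i₂)]
    exact hle i₂ (by omega) hi₂
  calc chord P a b m = chord (chord P a b) j i₂ m := (chord_chord hji).symm
    _ ≤ chord (chord P i₁ i₂) j i₂ m := chord_le_chord hjm.le hmi.le hj hi₂'
    _ = npHullRAt n P m := by rw [chord_chord hji, h]

theorem chord_lt_npHullRAt_of_isNPBreak (hbreak : IsNPBreak n P a) (hab : a < b) (hb : b ≤ 0)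
    (hle : ∀ j, a ≤ j → j ≤ 0 → chord P a b j ≤ P j)
    (hlt : ∀ j, b < j → j ≤ 0 → chord P a b j < P j) (hbm : b < m) (hm : m ≤ 0) :
    chord P a b m < npHullRAt n P m := by
  have ha := hbreak.neg_le
  rcases npHullRAt_eq_self_or_chord (n := n) (P := P) (by omega) (by omega) hm with
    h | ⟨i₁, i₂, hi₁, him, hmi, hi₂, h⟩
  · exact h ▸ hlt m hbm hm
  obtain ⟨j, hjm, hj⟩ :=
    exists_lt_chord_le_chord hbreak hab hb hle hi₁ him (by omega) hmi hi₂
  have hji : j ≠ i₂ := by omega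
  have hi₂' : chord P a b i₂ < chord P i₁ i₂ i₂ := by
    rw [chord_right (by omega : i₁ ≠ i₂)]
    exact hlt i₂ (by omega) hi₂
  calc chord P a b m = chord (chord P a b) j i₂ m := (chord_chord hji).symm
    _ < chord (chord P i₁ i₂) j i₂ m := chord_lt_chord hjm hmi.le hj hi₂'
    _ = npHullRAt n P m := by rw [chord_chord hji, h]

end Support

end NewtonPolygon

open NewtonPolygon

theorem next_break_characterization_general
    (n : ℕ)
    (P : ℤ → ℝ)
    (ms ms1 : ℤ) (h2 : ms < ms1) (h3 : ms1 ≤ 0)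
    (hbreak : IsNPBreak n P ms)
    (hyp1 : ∀ j : ℤ, ms ≤ j → j < ms1 →
      (P j - P ms1) / ((j : ℝ) - (ms1 : ℝ)) ≤ (P ms - P ms1) / ((ms : ℝ) - (ms1 : ℝ)))
    (hyp2 : ∀ j : ℤ, ms1 < j → j ≤ 0 →
      (P ms - P ms1) / ((ms : ℝ) - (ms1 : ℝ)) < (P j - P ms1) / ((j : ℝ) - (ms1 : ℝ))) :
    IsNPBreak n P ms1 ∧ ∀ j : ℤ, ms < j → j < ms1 → ¬ IsNPBreak n P j := by
  have h1 := hbreak.neg_le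
  have hlt : ∀ j, ms1 < j → j ≤ 0 → chord P ms ms1 j < P j := fun j hj hj0 =>
    chord_lt_of_slope_lt h2.ne hj (hyp2 j hj hj0)
  have hle : ∀ j, ms ≤ j → j ≤ 0 → chord P ms ms1 j ≤ P j := by
    intro j hj hj0
    rcases lt_trichotomy j ms1 with hj1 | rfl | hj1
    · exact chord_le_of_slope_le h2.ne hj1 (hyp1 j hj hj1)
    · exact (chord_right h2.ne).le
    · exact (hlt j hj1 hj0).le
  have hon : ∀ j, ms ≤ j → j ≤ ms1 → npHullRAt n P j = chord P ms ms1 j := fun j hj hj1 =>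
    (npHullRAt_le_chord h1 hj hj1 h3 h2).antisymm
      (chord_le_npHullRAt_of_isNPBreak hbreak h2 h3 hle hj (hj1.trans h3))
  refine ⟨?_, fun j hj hj1 hbreakj => ?_⟩
  · rcases h3.lt_or_eq with h3 | rfl
    · rw [isNPBreak_iff_of_lt_of_lt (by omega) h3, hon ms1 h2.le le_rfl,
        hon (ms1 - 1) (by omega) (by omega)]
      have := chord_lt_npHullRAt_of_isNPBreak hbreak h2 h3.le hle hlt (lt_add_one ms1) (by omega)
      linarith [chord_sub_one_add_chord_add_one (P := P) (i₁ := ms) (i₂ := ms1) (m := ms1)]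
    · exact Or.inr (Or.inl rfl)
  · rw [isNPBreak_iff_of_lt_of_lt (by omega) (by omega), hon j hj.le hj1.le,
      hon (j - 1) (by omega) (by omega), hon (j + 1) (by omega) (by omega)] at hbreakj
    linarith [chord_sub_one_add_chord_add_one (P := P) (i₁ := ms) (i₂ := ms1) (m := j)]

/-- Let `v` be a real-valued valuation on `K` and
`ℓ = ∑ aᵢ Tⁱ` monic of degree `n ≥ 1`, with Newton polygon the lower convex hull
of the points `(-i, v aᵢ)`.  If `m_s` is a break, every point with abscissa in
`[m_s, m_{s+1})` lies on or above the segment through `(m_s, v a_{-m_s})` and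
`(m_{s+1}, v a_{-m_{s+1}})` (slope comparison `≤`), and every point with
abscissa in `(m_{s+1}, 0]` lies strictly above the corresponding line (strict
reverse slope comparison), then `m_{s+1}` is the smallest break strictly larger
than `m_s`. -/
theorem next_break_characterization
    (K : Type*) [Field K] (v : K → ℝ)
    (hmul : ∀ x y : K, x ≠ 0 → y ≠ 0 → v (x * y) = v x + v y)
    (hadd : ∀ x y : K, x ≠ 0 → y ≠ 0 → x + y ≠ 0 → min (v x) (v y) ≤ v (x + y))
    (a : ℕ → K) (n : ℕ) (hn : 1 ≤ n) (hmonic : a n = 1)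
    (P : ℤ → ℝ) (hP : P = fun m : ℤ => v (a m.natAbs))
    (ms ms1 : ℤ) (h1 : -(n : ℤ) ≤ ms) (h2 : ms < ms1) (h3 : ms1 ≤ 0)
    (hbreak : IsNPBreak n P ms)
    (hyp1 : ∀ j : ℤ, ms ≤ j → j < ms1 →
      (P j - P ms1) / ((j : ℝ) - (ms1 : ℝ)) ≤ (P ms - P ms1) / ((ms : ℝ) - (ms1 : ℝ)))
    (hyp2 : ∀ j : ℤ, ms1 < j → j ≤ 0 →
      (P ms - P ms1) / ((ms : ℝ) - (ms1 : ℝ)) < (P j - P ms1) / ((j : ℝ) - (ms1 : ℝ))) :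
    IsNPBreak n P ms1 ∧ ∀ j : ℤ, ms < j → j < ms1 → ¬ IsNPBreak n P j :=
  next_break_characterization_general n P ms ms1 h2 h3 hbreak hyp1 hyp2
end
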